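/- arXiv:1810.13255 — 2 statements merged into one kernel-verified Lean document; each statement's English description precedes it below -/
import Mathlib

section
/- For every natural number m ≥ 1, the identity -∑_{p=1}^{m} S(m,p) · (-1/2)^p · (2p-3)!! = 1/2^m holds, where S(m,p) denotes the Stirling numbers of the second kind and (-1)!! = 1. -/
/-- Stirling numbers of the second kind: `stirling2 m p` counts set-partitions
of an `m`-element set into `p` nonempty blocks. -/
def stirling2 : ℕ → ℕ → ℕ
  | 0, 0 => 1
  | 0, _ + 1 => 0
  | _ + 1, 0 => 0
  | m + 1, p + 1 => (p + 1) * stirling2 m (p + 1) + stirling2 m p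

lemma stirling2_eq_zero : ∀ m p, m < p → stirling2 m p = 0 := by
  intro m
  induction m with
  | zero => intro p hp; cases p with
    | zero => omega
    | succ q => rfl
  | succ n ih =>
    intro p hp
    cases p with
    | zero => omega
    | succ q =>
      show (q + 1) * stirling2 n (q + 1) + stirling2 n q = 0
      rw [ih (q+1) (by omega), ih q (by omega)]
      ring

lemma stirling2_zero (m : ℕ) (hm : 1 ≤ m) : stirling2 m 0 = 0 := by
  cases m with
  | zero => omega
  | succ n => rfl

lemma dfact_cast (q : ℕ) :
    (Nat.doubleFactorial (2*q+1) : ℚ) = (2*q+1 : ℕ) * (Nat.doubleFactorial (2*q-1) : ℚ) := by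
  cases q with
  | zero => simp [Nat.doubleFactorial]
  | succ n =>
    have h1 : 2*(n+1)+1 = (2*n+1)+2 := by omega
    have h2 : 2*(n+1)-1 = 2*n+1 := by omega
    rw [h1, h2, Nat.doubleFactorial]
    push_cast; ring

lemma sum_Icc_one (f : ℕ → ℚ) (n : ℕ) :
    ∑ p ∈ Finset.Icc 1 n, f p = ∑ q ∈ Finset.range n, f (q+1) := by
  induction n with
  | zero => simp
  | succ n ih =>
    rw [Finset.sum_range_succ, ← ih, Finset.sum_Icc_succ_top (by omega)]

lemma key : ∀ m, 1 ≤ m →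
    (∑ p ∈ Finset.Icc 1 m, (stirling2 m p : ℚ) * (-(1/2 : ℚ)) ^ p *
        (Nat.doubleFactorial (2 * p - 3) : ℚ)) = -(1/2 : ℚ)^m := by
  intro m hm
  induction m, hm using Nat.le_induction with
  | base => simp [stirling2, Nat.doubleFactorial]
  | succ m hm ih =>
    rw [sum_Icc_one] at ih ⊢
    have hrec : ∀ q : ℕ, (stirling2 (m+1) (q+1) : ℚ)
        = (q+1 : ℕ) * stirling2 m (q+1) + stirling2 m q := by
      intro q
      show ((((q + 1) * stirling2 m (q + 1) + stirling2 m q : ℕ)) : ℚ) = _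
      push_cast; ring
    calc ∑ q ∈ Finset.range (m+1), (stirling2 (m+1) (q+1) : ℚ) * (-(1/2 : ℚ)) ^ (q+1) *
            (Nat.doubleFactorial (2 * (q+1) - 3) : ℚ)
        = (∑ q ∈ Finset.range (m+1), ((q+1 : ℕ) : ℚ) * (stirling2 m (q+1) : ℚ) *
              (-(1/2 : ℚ)) ^ (q+1) * (Nat.doubleFactorial (2 * (q+1) - 3) : ℚ))
          + (∑ q ∈ Finset.range (m+1), (stirling2 m q : ℚ) * (-(1/2 : ℚ)) ^ (q+1) *
              (Nat.doubleFactorial (2 * (q+1) - 3) : ℚ)) := by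
          rw [← Finset.sum_add_distrib]
          refine Finset.sum_congr rfl fun q _ => ?_
          rw [hrec q]; ring
      _ = (∑ q ∈ Finset.range m, ((q+1 : ℕ) : ℚ) * (stirling2 m (q+1) : ℚ) *
              (-(1/2 : ℚ)) ^ (q+1) * (Nat.doubleFactorial (2 * (q+1) - 3) : ℚ))
          + (∑ q ∈ Finset.range m, (stirling2 m (q+1) : ℚ) * (-(1/2 : ℚ)) ^ (q+2) *
              (Nat.doubleFactorial (2 * (q+2) - 3) : ℚ)) := by
          rw [Finset.sum_range_succ, stirling2_eq_zero m (m+1) (by omega)]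
          rw [Finset.sum_range_succ', stirling2_zero m hm]
          simp
      _ = ∑ q ∈ Finset.range m, (1/2 : ℚ) * ((stirling2 m (q+1) : ℚ) * (-(1/2 : ℚ)) ^ (q+1) *
              (Nat.doubleFactorial (2 * (q+1) - 3) : ℚ)) := by
          rw [← Finset.sum_add_distrib]
          refine Finset.sum_congr rfl fun q _ => ?_
          have h1 : 2 * (q+2) - 3 = 2*q+1 := by omega
          have h2 : 2 * (q+1) - 3 = 2*q-1 := by omega
          rw [h1, h2, dfact_cast q]
          push_cast
          ring
      _ = -(1/2 : ℚ)^(m+1) := by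
          rw [← Finset.mul_sum, ih]; ring

/-- For `m ≥ 1`, `-∑_{p=1}^{m} S(m,p) (-1/2)^p (2p-3)!! = 1/2^m`,
where `(2p-3)!!` is interpreted with the convention `(-1)!! = 1`
(note `2*p - 3 = 0` in ℕ for `p = 1`, and `0‼ = 1`). -/
theorem stirling_doubleFactorial_sum (m : ℕ) (hm : 1 ≤ m) :
    -(∑ p ∈ Finset.Icc 1 m, (stirling2 m p : ℚ) * (-(1/2 : ℚ)) ^ p *
        (Nat.doubleFactorial (2 * p - 3) : ℚ)) = 1 / 2 ^ m := by
  rw [key m hm, neg_neg, div_pow, one_pow]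
end

section
/- Triangular inversion of the two-block system: let (A_S) and (B_S) be families of elements of a commutative ℚ-algebra indexed by nonempty finite subsets S of ℕ, related by A_S = ∑_{I} ∏_{b ∈ I} B_b where the sum is over set-partitions I of S into at most two blocks. Then B_S = ∑_{I} (-1)^{|I|-1} (2|I|-3)!! ∏_{b ∈ I} A_b, where now the sum is over all set-partitions I of S, and (-1)!! = 1. -/
open Finset

/-- shifted odd double factorial: `ddf n = (2n-1)‼`, with `ddf 0 = 1`. -/
def ddf : ℕ → ℕ
  | 0 => 1
  | (n+1) => (2*n+1) * ddf n

lemma ddf_succ (n : ℕ) : ddf (n+1) = (2*n+1) * ddf n := rfl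

lemma key_id (n : ℕ) :
    ∑ j ∈ range (n+1), (n+1).choose j * (ddf j * ddf (n-j)) = ddf (n+1) := by
  induction n with
  | zero => simp [ddf]
  | succ n ih =>
    rw [Finset.sum_range_succ' (fun j => (n+2).choose j * (ddf j * ddf (n+1-j))) (n+1)]
    have hW : ∀ i ∈ range (n+1),
        (n+2).choose (i+1) * (ddf (i+1) * ddf (n+1-(i+1)))
        = (n+1).choose i * ((2*i+1) * (ddf i * ddf (n-i)))
          + (n+1).choose (i+1) * (ddf (i+1) * ddf ((n+1)-(i+1))) := by
      intro i hi
      have h1 : n+1-(i+1) = n-i := by omega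
      rw [h1, Nat.choose_succ_succ, add_mul, ddf_succ]
      ring
    rw [Finset.sum_congr rfl hW, Finset.sum_add_distrib]
    have hU : (∑ i ∈ range (n+1), (n+1).choose (i+1) * (ddf (i+1) * ddf ((n+1)-(i+1))))
        + (n+2).choose 0 * (ddf 0 * ddf (n+1-0))
        = ∑ j ∈ range (n+2), (n+1).choose j * (ddf j * ddf (n+1-j)) := by
      rw [Finset.sum_range_succ' (fun j => (n+1).choose j * (ddf j * ddf (n+1-j))) (n+1)]
      simp [ddf]
    rw [add_assoc, hU]
    have hU2 : ∑ j ∈ range (n+2), (n+1).choose j * (ddf j * ddf (n+1-j))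
        = (∑ j ∈ range (n+1), (n+1).choose j * ((2*(n-j)+1) * (ddf j * ddf (n-j))))
          + ddf (n+1) := by
      rw [Finset.sum_range_succ]
      congr 1
      · apply Finset.sum_congr rfl
        intro j hj
        have hj' : j ≤ n := Nat.lt_succ_iff.mp (mem_range.mp hj)
        have h1 : n+1-j = (n-j)+1 := by omega
        rw [h1, ddf_succ]
        ring
      · simp [ddf]
    rw [hU2, ← add_assoc, ← Finset.sum_add_distrib]
    have hC : ∀ i ∈ range (n+1),
        (n+1).choose i * ((2*i+1) * (ddf i * ddf (n-i)))
          + (n+1).choose i * ((2*(n-i)+1) * (ddf i * ddf (n-i)))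
        = (2*n+2) * ((n+1).choose i * (ddf i * ddf (n-i))) := by
      intro i hi
      have hi' : i ≤ n := Nat.lt_succ_iff.mp (mem_range.mp hi)
      have h2 : (2*i+1) + (2*(n-i)+1) = 2*n+2 := by omega
      rw [← h2]
      ring
    rw [Finset.sum_congr rfl hC, ← Finset.mul_sum, ih]
    have h3 : ddf (n+2) = (2*(n+1)+1) * ddf (n+1) := rfl
    rw [h3]
    ring

/-- The coefficient `(-1)^(m-1) * (2m-3)‼`. -/
def cf (R : Type*) [CommRing R] (m : ℕ) : R := (-1)^(m-1) * (ddf (m-1) : R)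

section cfLemmas
variable {R : Type*} [CommRing R]

lemma cf_zero : cf R 0 = 1 := by simp [cf, ddf]
lemma cf_one : cf R 1 = 1 := by simp [cf, ddf]

lemma cf_eq (m : ℕ) :
    (-1:R)^(m-1) * ((Nat.doubleFactorial (2*m-3)) : R) = cf R m := by
  have h : 2*m - 3 = 2*(m-1) - 1 := by omega
  rw [cf, h]
  congr 2
  · induction (m-1) with
    | zero => rfl
    | succ n ih =>
      cases n with
      | zero => rfl
      | succ k =>
        have h : 2 * (k+2) - 1 = (2*(k+1) - 1) + 2 := by omega
        rw [h, Nat.doubleFactorial, ih]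
        have h2 : 2*(k+1) - 1 + 2 = 2*(k+1)+1 := by omega
        rw [h2]; rfl

lemma powerset_sum_cf (n : ℕ) (P' : Finset (Finset ℕ)) (hc : P'.card = n + 1) :
    ∑ Q' ∈ P'.powerset, cf R (Q'.card + 1) * cf R (n + 1 - Q'.card) = 0 := by
  rw [Finset.sum_powerset, hc]
  have hinner : ∀ j ∈ range (n+2),
      ∑ t ∈ powersetCard j P', cf R (t.card + 1) * cf R (n + 1 - t.card)
      = ((n+1).choose j : R) * (cf R (j+1) * cf R (n+1-j)) := by
    intro j hj
    rw [Finset.sum_congr rfl (fun t ht => by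
      rw [(Finset.mem_powersetCard.mp ht).2]), Finset.sum_const, ← hc,
      Finset.card_powersetCard, hc, nsmul_eq_mul]
  rw [Finset.sum_congr rfl hinner, Finset.sum_range_succ]
  have hlast : ((n+1).choose (n+1) : R) * (cf R (n+2) * cf R (n+1-(n+1)))
      = (-1)^(n+1) * (ddf (n+1) : R) := by
    simp [cf_zero, Nat.choose_self]
    rfl
  have hbody : ∀ j ∈ range (n+1),
      ((n+1).choose j : R) * (cf R (j+1) * cf R (n+1-j))
      = (-1)^n * (((n+1).choose j : R) * ((ddf j : R) * (ddf (n-j) : R))) := by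
    intro j hj
    have hjn : j ≤ n := Nat.lt_succ_iff.mp (mem_range.mp hj)
    have h1 : n + 1 - j = (n - j) + 1 := by omega
    rw [h1]
    show ((n+1).choose j : R) * ((-1)^((j+1)-1) * (ddf ((j+1)-1) : R)
      * ((-1)^((n-j+1)-1) * (ddf ((n-j+1)-1) : R))) = _
    simp only [Nat.add_sub_cancel]
    have h2 : (-1:R)^j * (-1:R)^(n-j) = (-1:R)^n := by
      rw [← pow_add]
      congr 1
      omega
    calc ((n+1).choose j : R) * ((-1)^j * (ddf j : R) * ((-1)^(n-j) * (ddf (n-j) : R)))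
        = ((-1:R)^j * (-1:R)^(n-j)) * (((n+1).choose j : R) * ((ddf j : R) * (ddf (n-j):R))) := by
          ring
      _ = _ := by rw [h2]
  rw [Finset.sum_congr rfl hbody, ← Finset.mul_sum, hlast]
  have hkey : ∑ j ∈ range (n+1), (((n+1).choose j : R) * ((ddf j : R) * (ddf (n-j) : R)))
      = (ddf (n+1) : R) := by
    have h := key_id n
    exact_mod_cast congrArg (fun x : ℕ => (x : R)) h
  rw [hkey, pow_succ]
  ring

end cfLemmas

/-- The finite set of set-partitions of a finite set `S ⊆ ℕ`, encoded as finite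
families of pairwise disjoint nonempty subsets covering `S`. -/
def partitionsOf (S : Finset ℕ) : Finset (Finset (Finset ℕ)) :=
  S.powerset.powerset.filter fun P =>
    (∀ b ∈ P, b.Nonempty) ∧ (∀ b ∈ P, ∀ c ∈ P, b ≠ c → Disjoint b c) ∧
    (∀ x ∈ S, ∃ b ∈ P, x ∈ b)

section partitionLemmas

variable {S T : Finset ℕ} {P Q Q₁ Q₂ : Finset (Finset ℕ)}

lemma mem_partitionsOf :
    P ∈ partitionsOf S ↔
      (∀ b ∈ P, b ⊆ S) ∧ (∀ b ∈ P, b.Nonempty) ∧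
      (∀ b ∈ P, ∀ c ∈ P, b ≠ c → Disjoint b c) ∧ (∀ x ∈ S, ∃ b ∈ P, x ∈ b) := by
  simp only [partitionsOf, mem_filter, mem_powerset, Finset.subset_iff, mem_powerset,
    and_assoc]

lemma blocks_subset (h : P ∈ partitionsOf S) : ∀ b ∈ P, b ⊆ S := (mem_partitionsOf.mp h).1
lemma blocks_nonempty (h : P ∈ partitionsOf S) : ∀ b ∈ P, b.Nonempty :=
  (mem_partitionsOf.mp h).2.1
lemma blocks_disjoint (h : P ∈ partitionsOf S) :
    ∀ b ∈ P, ∀ c ∈ P, b ≠ c → Disjoint b c := (mem_partitionsOf.mp h).2.2.1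
lemma blocks_cover (h : P ∈ partitionsOf S) : ∀ x ∈ S, ∃ b ∈ P, x ∈ b :=
  (mem_partitionsOf.mp h).2.2.2

lemma block_unique (h : P ∈ partitionsOf S) {b c : Finset ℕ} (hb : b ∈ P) (hc : c ∈ P)
    {x : ℕ} (hxb : x ∈ b) (hxc : x ∈ c) : b = c := by
  by_contra hne
  exact Finset.disjoint_left.mp (blocks_disjoint h b hb c hc hne) hxb hxc

lemma sup_of_partition (h : P ∈ partitionsOf S) : P.sup id = S := by
  apply subset_antisymm
  · exact Finset.sup_le fun b hb => blocks_subset h b hb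
  · intro x hx
    obtain ⟨b, hb, hxb⟩ := blocks_cover h x hx
    exact mem_sup.mpr ⟨b, hb, hxb⟩

lemma singleton_mem_partitionsOf (hS : S.Nonempty) :
    ({S} : Finset (Finset ℕ)) ∈ partitionsOf S := by
  rw [mem_partitionsOf]
  refine ⟨?_, ?_, ?_, ?_⟩ <;> simp [hS]

lemma card_pos_of_partition (h : P ∈ partitionsOf S) (hS : S.Nonempty) : 0 < P.card := by
  obtain ⟨x, hx⟩ := hS
  obtain ⟨b, hb, -⟩ := blocks_cover h x hx
  exact Finset.card_pos.mpr ⟨b, hb⟩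

lemma eq_singleton_of_card_le_one (h : P ∈ partitionsOf S) (hS : S.Nonempty)
    (hc : P.card ≤ 1) : P = {S} := by
  have h1 : P.card = 1 := le_antisymm hc (card_pos_of_partition h hS)
  obtain ⟨b, hb⟩ := Finset.card_eq_one.mp h1
  subst hb
  congr 1
  apply subset_antisymm (blocks_subset h b (mem_singleton_self b))
  intro x hx
  obtain ⟨c, hc', hxc⟩ := blocks_cover h x hx
  exact (mem_singleton.mp hc') ▸ hxc

lemma subset_mem_partitionsOf (h : P ∈ partitionsOf S) (hQ : Q ⊆ P) :
    Q ∈ partitionsOf (Q.sup id) := by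
  rw [mem_partitionsOf]
  refine ⟨fun b hb => le_sup (f := id) hb, fun b hb => blocks_nonempty h b (hQ hb),
    fun b hb c hc => blocks_disjoint h b (hQ hb) c (hQ hc), fun x hx => mem_sup.mp hx⟩

lemma union_mem_partitionsOf {T₁ T₂ : Finset ℕ} (h₁ : Q₁ ∈ partitionsOf T₁)
    (h₂ : Q₂ ∈ partitionsOf T₂) (hd : Disjoint T₁ T₂) :
    Q₁ ∪ Q₂ ∈ partitionsOf (T₁ ∪ T₂) := by
  rw [mem_partitionsOf]
  have hs₁ := blocks_subset h₁; have hs₂ := blocks_subset h₂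
  refine ⟨?_, ?_, ?_, ?_⟩
  · intro b hb
    rcases mem_union.mp hb with hb | hb
    · exact (hs₁ b hb).trans subset_union_left
    · exact (hs₂ b hb).trans subset_union_right
  · intro b hb
    rcases mem_union.mp hb with hb | hb
    · exact blocks_nonempty h₁ b hb
    · exact blocks_nonempty h₂ b hb
  · intro b hb c hc hne
    rcases mem_union.mp hb with hb | hb <;> rcases mem_union.mp hc with hc | hc
    · exact blocks_disjoint h₁ b hb c hc hne
    · exact Finset.disjoint_of_subset_left (hs₁ b hb)
        (Finset.disjoint_of_subset_right (hs₂ c hc) hd)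
    · exact Finset.disjoint_of_subset_left (hs₂ b hb)
        (Finset.disjoint_of_subset_right (hs₁ c hc) hd.symm)
    · exact blocks_disjoint h₂ b hb c hc hne
  · intro x hx
    rcases mem_union.mp hx with hx | hx
    · obtain ⟨b, hb, hxb⟩ := blocks_cover h₁ x hx
      exact ⟨b, mem_union_left _ hb, hxb⟩
    · obtain ⟨b, hb, hxb⟩ := blocks_cover h₂ x hx
      exact ⟨b, mem_union_right _ hb, hxb⟩

lemma disjoint_parts {T₁ T₂ : Finset ℕ} (h₁ : Q₁ ∈ partitionsOf T₁)
    (h₂ : Q₂ ∈ partitionsOf T₂) (hd : Disjoint T₁ T₂) : Disjoint Q₁ Q₂ := by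
  rw [Finset.disjoint_left]
  intro b hb₁ hb₂
  obtain ⟨x, hx⟩ := blocks_nonempty h₁ b hb₁
  exact (Finset.disjoint_left.mp hd (blocks_subset h₁ b hb₁ hx)) (blocks_subset h₂ b hb₂ hx)

lemma filter_mem_eq (hP : P ∈ partitionsOf S) {x : ℕ} {b0 : Finset ℕ}
    (hb0 : b0 ∈ P) (hx : x ∈ b0) : P.filter (fun b => x ∈ b) = {b0} := by
  ext c
  simp only [mem_filter, mem_singleton]
  constructor
  · rintro ⟨hcP, hxc⟩
    exact block_unique hP hcP hb0 hxc hx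
  · rintro rfl
    exact ⟨hb0, hx⟩

lemma two_block_pair (h2 : P.card = 2) {b : Finset ℕ} (hb : b ∈ P) :
    ∃ c, c ∈ P ∧ b ≠ c ∧ P = {b, c} := by
  obtain ⟨u, v, huv, rfl⟩ := Finset.card_eq_two.mp h2
  rcases mem_insert.mp hb with rfl | hbv
  · exact ⟨v, by simp, huv, rfl⟩
  · have hbv' : b = v := mem_singleton.mp hbv
    subst hbv'
    exact ⟨u, by simp, huv.symm, by rw [Finset.pair_comm]⟩

lemma compl_block (hP : P ∈ partitionsOf S) {b c : Finset ℕ} (hb : b ∈ P) (hc : c ∈ P)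
    (hbc : b ≠ c) (hcov : ∀ d ∈ P, d = b ∨ d = c) : S \ b = c := by
  apply subset_antisymm
  · intro y hy
    rw [mem_sdiff] at hy
    obtain ⟨d, hd, hyd⟩ := blocks_cover hP y hy.1
    rcases hcov d hd with rfl | rfl
    · exact absurd hyd hy.2
    · exact hyd
  · intro y hy
    rw [mem_sdiff]
    exact ⟨blocks_subset hP c hc hy, fun hyb => hbc (block_unique hP hb hc hyb hy)⟩

lemma sup_sdiff_parts (hP : P ∈ partitionsOf S) (hQ : Q ⊆ P) :
    (P \ Q).sup id = S \ (Q.sup id) := by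
  apply subset_antisymm
  · intro y hy
    obtain ⟨c, hc, hyc⟩ := mem_sup.mp hy
    have hcP : c ∈ P := (mem_sdiff.mp hc).1
    have hcQ : c ∉ Q := (mem_sdiff.mp hc).2
    rw [mem_sdiff]
    refine ⟨blocks_subset hP c hcP hyc, fun hyT => ?_⟩
    obtain ⟨d, hdQ, hyd⟩ := mem_sup.mp hyT
    exact hcQ ((block_unique hP hcP (hQ hdQ) hyc hyd) ▸ hdQ)
  · intro y hy
    rw [mem_sdiff] at hy
    obtain ⟨d, hdP, hyd⟩ := blocks_cover hP y hy.1
    exact mem_sup.mpr ⟨d, mem_sdiff.mpr ⟨hdP, fun hdQ => hy.2 (mem_sup.mpr ⟨d, hdQ, hyd⟩)⟩, hyd⟩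

/-- The per-partition coefficient identity: summing over proper nonempty splits of the
blocks of `P` that contain the block of `x0`. -/
lemma splits_sum {R : Type*} [CommRing R] (hP : P ∈ partitionsOf S) {x0 : ℕ} (hx0 : x0 ∈ S)
    (h2 : 2 ≤ P.card) :
    ∑ Q ∈ P.powerset.filter (fun Q => Q.Nonempty ∧ Q ≠ P ∧ ∃ b ∈ Q, x0 ∈ b),
      cf R Q.card * cf R (P.card - Q.card) = - cf R P.card := by
  classical
  obtain ⟨b0, hb0, hxb0⟩ := blocks_cover hP x0 hx0
  set P' := P.erase b0 with hP'
  have hb0P' : b0 ∉ P' := notMem_erase _ _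
  have hcP' : P'.card + 1 = P.card := by
    rw [hP', Finset.card_erase_of_mem hb0]
    omega
  -- rewrite the sum as a sum over proper subsets of P'
  have hbij : ∑ Q ∈ P.powerset.filter (fun Q => Q.Nonempty ∧ Q ≠ P ∧ ∃ b ∈ Q, x0 ∈ b),
      cf R Q.card * cf R (P.card - Q.card)
      = ∑ Q' ∈ P'.powerset.filter (fun Q' => Q' ≠ P'),
          cf R (Q'.card + 1) * cf R (P.card - Q'.card - 1) := by
    apply Finset.sum_nbij' (i := fun Q => Q.erase b0) (j := fun Q' => insert b0 Q')
    · intro Q hQ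
      rw [mem_filter, mem_powerset] at hQ
      obtain ⟨hQP, hQne, hQneP, b, hbQ, hxb⟩ := hQ
      have hb0Q : b0 ∈ Q := by
        have : b = b0 := block_unique hP (hQP hbQ) hb0 hxb hxb0
        exact this ▸ hbQ
      rw [mem_filter, mem_powerset]
      refine ⟨Finset.erase_subset_erase _ hQP, fun heq => hQneP ?_⟩
      have : insert b0 (Q.erase b0) = insert b0 P' := by rw [heq]
      rwa [Finset.insert_erase hb0Q, hP', Finset.insert_erase hb0] at this
    · intro Q' hQ'
      rw [mem_filter, mem_powerset] at hQ'
      obtain ⟨hQ'P', hQ'ne⟩ := hQ'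
      have hb0Q' : b0 ∉ Q' := fun h => hb0P' (hQ'P' h)
      rw [mem_filter, mem_powerset]
      refine ⟨Finset.insert_subset hb0 (hQ'P'.trans (Finset.erase_subset _ _)),
        Finset.insert_nonempty _ _, fun heq => hQ'ne ?_, b0, mem_insert_self _ _, hxb0⟩
      have := congrArg (fun s => Finset.erase s b0) heq
      simpa [Finset.erase_insert hb0Q'] using this
    · intro Q hQ
      rw [mem_filter, mem_powerset] at hQ
      obtain ⟨hQP, hQne, hQneP, b, hbQ, hxb⟩ := hQ
      have hb0Q : b0 ∈ Q := by
        have : b = b0 := block_unique hP (hQP hbQ) hb0 hxb hxb0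
        exact this ▸ hbQ
      exact Finset.insert_erase hb0Q
    · intro Q' hQ'
      rw [mem_filter, mem_powerset] at hQ'
      have hb0Q' : b0 ∉ Q' := fun h => hb0P' (hQ'.1 h)
      exact Finset.erase_insert hb0Q'
    · intro Q hQ
      rw [mem_filter, mem_powerset] at hQ
      obtain ⟨hQP, hQne, hQneP, b, hbQ, hxb⟩ := hQ
      have hb0Q : b0 ∈ Q := by
        have : b = b0 := block_unique hP (hQP hbQ) hb0 hxb hxb0
        exact this ▸ hbQ
      have hcard : (Q.erase b0).card + 1 = Q.card := by
        rw [Finset.card_erase_of_mem hb0Q]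
        have : 0 < Q.card := Finset.card_pos.mpr hQne
        omega
      rw [hcard]
      congr 2
      omega
  rw [hbij]
  -- complete the sum over all subsets of P'
  have hfull := Finset.sum_filter_add_sum_filter_not P'.powerset (fun Q' => Q' ≠ P')
    (fun Q' => cf R (Q'.card + 1) * cf R (P.card - Q'.card - 1))
  have htop : P'.powerset.filter (fun Q' => ¬ Q' ≠ P') = {P'} := by
    ext Q'
    simp only [mem_filter, mem_powerset, not_not, mem_singleton]
    exact ⟨fun h => h.2, fun h => ⟨h ▸ Finset.Subset.refl _, h⟩⟩
  rw [htop, Finset.sum_singleton] at hfull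
  have hn : ∃ n, P'.card = n + 1 := ⟨P'.card - 1, by omega⟩
  obtain ⟨n, hn⟩ := hn
  have hzero : ∑ Q' ∈ P'.powerset, cf R (Q'.card + 1) * cf R (P.card - Q'.card - 1) = 0 := by
    have := powerset_sum_cf (R := R) n P' hn
    rw [← this]
    apply Finset.sum_congr rfl
    intro Q' hQ'
    congr 2
    omega
  have htopval : cf R (P'.card + 1) * cf R (P.card - P'.card - 1) = cf R P.card := by
    rw [hcP']
    have : P.card - P'.card - 1 = 0 := by omega
    rw [this, cf_zero, mul_one]
  rw [htopval] at hfull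
  rw [hzero] at hfull
  linear_combination hfull

end partitionLemmas

/-- Triangular inversion of the two-block system: if families `(A_S)`, `(B_S)` of
elements of a commutative ℚ-algebra, indexed by nonempty finite subsets `S` of ℕ,
satisfy `A_S = ∑_I ∏_{b ∈ I} B_b` (sum over set-partitions of `S` into at most two
blocks), then `B_S = ∑_I (-1)^{|I|-1} (2|I|-3)!! ∏_{b ∈ I} A_b` (sum over all
set-partitions of `S`), with the convention `(-1)!! = 1` (note `2*|I| - 3 = 0` in ℕ
when `|I| = 1`, and `0‼ = 1`). -/
theorem two_block_inversion {R : Type*} [CommRing R] [Algebra ℚ R]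
    (A B : Finset ℕ → R)
    (hAB : ∀ S : Finset ℕ, S.Nonempty →
      A S = ∑ P ∈ (partitionsOf S).filter (fun P => P.card ≤ 2), ∏ b ∈ P, B b) :
    ∀ S : Finset ℕ, S.Nonempty →
      B S = ∑ P ∈ partitionsOf S,
        (-1 : R) ^ (P.card - 1) * (Nat.doubleFactorial (2 * P.card - 3) : R) *
          ∏ b ∈ P, A b := by
  intro S₀
  induction S₀ using Finset.strongInduction with
  | _ S ih =>
  intro hS
  classical
  set x0 := S.min' hS with hx0def
  have hx0 : x0 ∈ S := S.min'_mem hS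
  -- restate the goal and the induction hypothesis using `cf`
  have hgoal : ∀ (T : Finset ℕ),
      (∑ P ∈ partitionsOf T,
        (-1 : R) ^ (P.card - 1) * (Nat.doubleFactorial (2 * P.card - 3) : R) * ∏ b ∈ P, A b)
      = ∑ P ∈ partitionsOf T, cf R P.card * ∏ b ∈ P, A b := by
    intro T
    exact Finset.sum_congr rfl fun P _ => by rw [cf_eq]
  rw [hgoal]
  have ih' : ∀ T : Finset ℕ, T ⊂ S → T.Nonempty →
      B T = ∑ Q ∈ partitionsOf T, cf R Q.card * ∏ b ∈ Q, A b := by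
    intro T hT hTne
    rw [ih T hT hTne, hgoal]
  -- Step A: isolate B S in the relation for A S
  have hA := hAB S hS
  have hsplit2 : (partitionsOf S).filter (fun P => P.card ≤ 2)
      = insert {S} ((partitionsOf S).filter (fun P => P.card = 2)) := by
    ext P
    simp only [mem_filter, mem_insert]
    constructor
    · rintro ⟨hP, hc⟩
      by_cases h1 : P.card ≤ 1
      · exact Or.inl (eq_singleton_of_card_le_one hP hS h1)
      · exact Or.inr ⟨hP, by omega⟩
    · rintro (rfl | ⟨hP, hc⟩)
      · exact ⟨singleton_mem_partitionsOf hS, by simp⟩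
      · exact ⟨hP, by omega⟩
  have hSnot : ({S} : Finset (Finset ℕ)) ∉ (partitionsOf S).filter (fun P => P.card = 2) := by
    simp [mem_filter]
  rw [hsplit2, Finset.sum_insert hSnot, Finset.prod_singleton] at hA
  -- Step B: two-block partitions are indexed by the distinguished block containing x0
  set D := S.powerset.filter (fun T => T.Nonempty ∧ T ≠ S ∧ x0 ∈ T) with hD
  have htwo : ∑ P ∈ (partitionsOf S).filter (fun P => P.card = 2), ∏ b ∈ P, B b
      = ∑ T ∈ D, B T * B (S \ T) := by
    apply Finset.sum_nbij' (i := fun P => (P.filter (fun b => x0 ∈ b)).sup id)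
      (j := fun T => {T, S \ T})
    · intro P hPf
      rw [mem_filter] at hPf
      obtain ⟨hP, h2⟩ := hPf
      obtain ⟨b0, hb0, hxb0⟩ := blocks_cover hP x0 hx0
      rw [filter_mem_eq hP hb0 hxb0, Finset.sup_singleton]
      simp only [id_eq]
      obtain ⟨c, hcP, hbc, hPeq⟩ := two_block_pair h2 hb0
      obtain ⟨y, hy⟩ := blocks_nonempty hP c hcP
      rw [hD, mem_filter, mem_powerset]
      refine ⟨blocks_subset hP b0 hb0, ⟨x0, hxb0⟩, fun hbS => ?_, hxb0⟩
      have hyS : y ∈ S := blocks_subset hP c hcP hy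
      have : y ∈ b0 := hbS ▸ hyS
      exact hbc (block_unique hP hb0 hcP this hy)
    · intro T hT
      rw [hD, mem_filter, mem_powerset] at hT
      obtain ⟨hTS, hTne, hTneS, hx0T⟩ := hT
      have hSTne : (S \ T).Nonempty :=
        Finset.sdiff_nonempty.mpr (fun h => hTneS (subset_antisymm hTS h))
      have hx0ST' : x0 ∉ S \ T := fun hh => (mem_sdiff.mp hh).2 hx0T
      have hTne' : T ≠ S \ T := fun h => hx0ST' (h ▸ hx0T)
      rw [mem_filter]
      constructor
      · rw [mem_partitionsOf]
        refine ⟨?_, ?_, ?_, ?_⟩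
        · intro b hb
          rcases mem_insert.mp hb with rfl | hb
          · exact hTS
          · rw [mem_singleton.mp hb]
            exact sdiff_subset
        · intro b hb
          rcases mem_insert.mp hb with rfl | hb
          · exact hTne
          · rw [mem_singleton.mp hb]
            exact hSTne
        · intro b hb c hc hbc
          rcases mem_insert.mp hb with rfl | hb <;> rcases mem_insert.mp hc with rfl | hc
          · exact absurd rfl hbc
          · rw [mem_singleton.mp hc]
            exact disjoint_sdiff_self_right
          · rw [mem_singleton.mp hb]
            exact disjoint_sdiff_self_left
          · rw [mem_singleton.mp hb, mem_singleton.mp hc] at hbc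
            exact absurd rfl hbc
        · intro x hx
          by_cases hxT : x ∈ T
          · exact ⟨T, mem_insert_self _ _, hxT⟩
          · exact ⟨S \ T, mem_insert_of_mem (mem_singleton_self _), mem_sdiff.mpr ⟨hx, hxT⟩⟩
      · exact Finset.card_pair hTne'
    · intro P hPf
      rw [mem_filter] at hPf
      obtain ⟨hP, h2⟩ := hPf
      obtain ⟨b0, hb0, hxb0⟩ := blocks_cover hP x0 hx0
      rw [filter_mem_eq hP hb0 hxb0, Finset.sup_singleton]
      obtain ⟨c, hcP, hbc, hPeq⟩ := two_block_pair h2 hb0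
      have hcov : ∀ d ∈ P, d = b0 ∨ d = c := by
        intro d hd
        rw [hPeq] at hd
        rcases mem_insert.mp hd with rfl | hd
        · exact Or.inl rfl
        · exact Or.inr (mem_singleton.mp hd)
      have hcompl : S \ b0 = c := compl_block hP hb0 hcP hbc hcov
      show ({(id b0 : Finset ℕ), S \ id b0} : Finset (Finset ℕ)) = P
      simp only [id_eq]
      rw [hcompl, hPeq]
    · intro T hT
      rw [hD, mem_filter, mem_powerset] at hT
      obtain ⟨hTS, hTne, hTneS, hx0T⟩ := hT
      have hx0ST : x0 ∉ S \ T := fun h => (mem_sdiff.mp h).2 hx0T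
      have : ({T, S \ T} : Finset (Finset ℕ)).filter (fun b => x0 ∈ b) = {T} := by
        ext b
        simp only [mem_filter, mem_insert, mem_singleton]
        constructor
        · rintro ⟨rfl | rfl, hxb⟩
          · rfl
          · exact absurd hxb hx0ST
        · rintro rfl
          exact ⟨Or.inl rfl, hx0T⟩
      rw [this, Finset.sup_singleton]
      rfl
    · intro P hPf
      rw [mem_filter] at hPf
      obtain ⟨hP, h2⟩ := hPf
      obtain ⟨b0, hb0, hxb0⟩ := blocks_cover hP x0 hx0
      rw [filter_mem_eq hP hb0 hxb0, Finset.sup_singleton]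
      obtain ⟨c, hcP, hbc, hPeq⟩ := two_block_pair h2 hb0
      have hcov : ∀ d ∈ P, d = b0 ∨ d = c := by
        intro d hd
        rw [hPeq] at hd
        rcases mem_insert.mp hd with rfl | hd
        · exact Or.inl rfl
        · exact Or.inr (mem_singleton.mp hd)
      have hcompl : S \ b0 = c := compl_block hP hb0 hcP hbc hcov
      show ∏ b ∈ P, B b = B (id b0) * B (S \ id b0)
      simp only [id_eq]
      rw [hcompl, hPeq, Finset.prod_pair hbc]
  rw [htwo] at hA
  -- Step C: expand using the induction hypothesis
  have hexp : ∀ T ∈ D, B T * B (S \ T)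
      = ∑ q ∈ (partitionsOf T) ×ˢ (partitionsOf (S \ T)),
          (cf R q.1.card * ∏ b ∈ q.1, A b) * (cf R q.2.card * ∏ b ∈ q.2, A b) := by
    intro T hT
    rw [hD, mem_filter, mem_powerset] at hT
    obtain ⟨hTS, hTne, hTneS, hx0T⟩ := hT
    have hTssub : T ⊂ S := Finset.ssubset_iff_subset_ne.mpr ⟨hTS, hTneS⟩
    have hSTssub : S \ T ⊂ S := Finset.sdiff_ssubset hTS hTne
    have hSTne : (S \ T).Nonempty :=
      Finset.sdiff_nonempty.mpr (fun h => hTneS (subset_antisymm hTS h))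
    rw [ih' T hTssub hTne, ih' (S \ T) hSTssub hSTne, Finset.sum_mul_sum]
    rw [Finset.sum_product]
  rw [Finset.sum_congr rfl hexp] at hA
  -- Step D: reindex by (partition of S, distinguished sub-collection of blocks)
  have hsig : ∑ T ∈ D, ∑ q ∈ (partitionsOf T) ×ˢ (partitionsOf (S \ T)),
        (cf R q.1.card * ∏ b ∈ q.1, A b) * (cf R q.2.card * ∏ b ∈ q.2, A b)
      = ∑ P ∈ partitionsOf S,
          ∑ Q ∈ P.powerset.filter (fun Q => Q.Nonempty ∧ Q ≠ P ∧ ∃ b ∈ Q, x0 ∈ b),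
            (cf R Q.card * ∏ b ∈ Q, A b) * (cf R (P \ Q).card * ∏ b ∈ P \ Q, A b) := by
    rw [Finset.sum_sigma' D (fun T => (partitionsOf T) ×ˢ (partitionsOf (S \ T)))
      (fun T q => (cf R q.1.card * ∏ b ∈ q.1, A b) * (cf R q.2.card * ∏ b ∈ q.2, A b))]
    rw [Finset.sum_sigma' (partitionsOf S)
      (fun P => P.powerset.filter (fun Q => Q.Nonempty ∧ Q ≠ P ∧ ∃ b ∈ Q, x0 ∈ b))
      (fun P Q => (cf R Q.card * ∏ b ∈ Q, A b) * (cf R (P \ Q).card * ∏ b ∈ P \ Q, A b))]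
    apply Finset.sum_nbij' (i := fun x => ⟨x.2.1 ∪ x.2.2, x.2.1⟩)
      (j := fun y => ⟨y.2.sup id, (y.2, y.1 \ y.2)⟩)
    · rintro ⟨T, Q₁, Q₂⟩ hx
      dsimp only
      rw [Finset.mem_sigma, Finset.mem_product] at hx
      obtain ⟨hT, hQ₁, hQ₂⟩ := hx
      rw [hD, mem_filter, mem_powerset] at hT
      obtain ⟨hTS, hTne, hTneS, hx0T⟩ := hT
      have hdTS : Disjoint T (S \ T) := disjoint_sdiff_self_right
      have hun : T ∪ (S \ T) = S := Finset.union_sdiff_of_subset hTS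
      have hPmem : Q₁ ∪ Q₂ ∈ partitionsOf S := hun ▸ union_mem_partitionsOf hQ₁ hQ₂ hdTS
      have hdQ : Disjoint Q₁ Q₂ := disjoint_parts hQ₁ hQ₂ hdTS
      rw [Finset.mem_sigma]
      refine ⟨hPmem, ?_⟩
      rw [mem_filter, mem_powerset]
      obtain ⟨b, hbQ₁, hxb⟩ := blocks_cover hQ₁ x0 hx0T
      have hSTne : (S \ T).Nonempty :=
        Finset.sdiff_nonempty.mpr (fun h => hTneS (subset_antisymm hTS h))
      obtain ⟨z, hz⟩ := hSTne
      obtain ⟨c, hcQ₂, hzc⟩ := blocks_cover hQ₂ z hz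
      refine ⟨subset_union_left, ⟨b, hbQ₁⟩, fun heq => ?_, b, hbQ₁, hxb⟩
      have heq' : Q₁ = Q₁ ∪ Q₂ := heq
      have hcQ₁ : c ∈ Q₁ := by rw [heq']; exact mem_union_right _ hcQ₂
      exact Finset.disjoint_left.mp hdQ hcQ₁ hcQ₂
    · rintro ⟨P, Q⟩ hy
      dsimp only
      rw [Finset.mem_sigma, mem_filter, mem_powerset] at hy
      obtain ⟨hP, hQP, hQne, hQneP, b, hbQ, hxb⟩ := hy
      have hQpart : Q ∈ partitionsOf (Q.sup id) := subset_mem_partitionsOf hP hQP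
      have hsdiff : (P \ Q).sup id = S \ (Q.sup id) := sup_sdiff_parts hP hQP
      have hQ2part : P \ Q ∈ partitionsOf (S \ (Q.sup id)) := by
        have := subset_mem_partitionsOf hP (Finset.sdiff_subset (s := P) (t := Q))
        rwa [hsdiff] at this
      rw [Finset.mem_sigma, Finset.mem_product]
      refine ⟨?_, hQpart, hQ2part⟩
      rw [hD, mem_filter, mem_powerset]
      have hTS : Q.sup id ⊆ S := Finset.sup_le fun c hc => blocks_subset hP c (hQP hc)
      have hx0T : x0 ∈ Q.sup id := mem_sup.mpr ⟨b, hbQ, hxb⟩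
      refine ⟨hTS, ⟨x0, hx0T⟩, fun hTSeq => ?_, hx0T⟩
      have hTSeq' : Q.sup id = S := hTSeq
      obtain ⟨c, hcP, hcQ⟩ := Finset.exists_of_ssubset
        (Finset.ssubset_iff_subset_ne.mpr ⟨hQP, hQneP⟩)
      obtain ⟨y, hy⟩ := blocks_nonempty hP c hcP
      have hymem : y ∈ (P \ Q).sup id := mem_sup.mpr ⟨c, mem_sdiff.mpr ⟨hcP, hcQ⟩, hy⟩
      rw [hsdiff, hTSeq'] at hymem
      exact (mem_sdiff.mp hymem).2 (mem_sdiff.mp hymem).1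
    · rintro ⟨T, Q₁, Q₂⟩ hx
      dsimp only
      rw [Finset.mem_sigma, Finset.mem_product] at hx
      obtain ⟨hT, hQ₁, hQ₂⟩ := hx
      rw [hD, mem_filter, mem_powerset] at hT
      obtain ⟨hTS, hTne, hTneS, hx0T⟩ := hT
      have hdTS : Disjoint T (S \ T) := disjoint_sdiff_self_right
      have hdQ : Disjoint Q₁ Q₂ := disjoint_parts hQ₁ hQ₂ hdTS
      have e1 : Q₁.sup id = T := sup_of_partition hQ₁
      have e2 : (Q₁ ∪ Q₂) \ Q₁ = Q₂ := Finset.union_sdiff_cancel_left hdQ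
      simp only [e1, e2]
    · rintro ⟨P, Q⟩ hy
      dsimp only
      rw [Finset.mem_sigma, mem_filter, mem_powerset] at hy
      obtain ⟨hP, hQP, hQne, hQneP, b, hbQ, hxb⟩ := hy
      have e : Q ∪ (P \ Q) = P := Finset.union_sdiff_of_subset hQP
      simp only [e]
    · rintro ⟨T, Q₁, Q₂⟩ hx
      dsimp only
      rw [Finset.mem_sigma, Finset.mem_product] at hx
      obtain ⟨hT, hQ₁, hQ₂⟩ := hx
      rw [hD, mem_filter, mem_powerset] at hT
      obtain ⟨hTS, hTne, hTneS, hx0T⟩ := hT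
      have hdTS : Disjoint T (S \ T) := disjoint_sdiff_self_right
      have hdQ : Disjoint Q₁ Q₂ := disjoint_parts hQ₁ hQ₂ hdTS
      have e2 : (Q₁ ∪ Q₂) \ Q₁ = Q₂ := Finset.union_sdiff_cancel_left hdQ
      simp only [e2]
  rw [hsig] at hA
  -- Step E: collapse the inner sums using the coefficient identity
  have hinner : ∀ P ∈ partitionsOf S,
      (∑ Q ∈ P.powerset.filter (fun Q => Q.Nonempty ∧ Q ≠ P ∧ ∃ b ∈ Q, x0 ∈ b),
        (cf R Q.card * ∏ b ∈ Q, A b) * (cf R (P \ Q).card * ∏ b ∈ P \ Q, A b))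
      = (∑ Q ∈ P.powerset.filter (fun Q => Q.Nonempty ∧ Q ≠ P ∧ ∃ b ∈ Q, x0 ∈ b),
          cf R Q.card * cf R (P.card - Q.card)) * ∏ b ∈ P, A b := by
    intro P hP
    rw [Finset.sum_mul]
    apply Finset.sum_congr rfl
    intro Q hQ
    rw [mem_filter, mem_powerset] at hQ
    obtain ⟨hQP, -, -, -⟩ := hQ
    rw [Finset.card_sdiff_of_subset hQP, ← Finset.prod_sdiff hQP (f := A)]
    ring
  rw [Finset.sum_congr rfl hinner] at hA
  -- Final assembly
  have hmain : ∑ P ∈ partitionsOf S,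
      (cf R P.card * ∏ b ∈ P, A b
        + (∑ Q ∈ P.powerset.filter (fun Q => Q.Nonempty ∧ Q ≠ P ∧ ∃ b ∈ Q, x0 ∈ b),
            cf R Q.card * cf R (P.card - Q.card)) * ∏ b ∈ P, A b)
      = A S := by
    rw [Finset.sum_eq_single_of_mem ({S} : Finset (Finset ℕ)) (singleton_mem_partitionsOf hS)]
    · have hempty : ({S} : Finset (Finset ℕ)).powerset.filter
          (fun Q => Q.Nonempty ∧ Q ≠ {S} ∧ ∃ b ∈ Q, x0 ∈ b) = ∅ := by
        apply Finset.eq_empty_of_forall_notMem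
        intro Q hQ
        rw [mem_filter, mem_powerset] at hQ
        obtain ⟨hQsub, hQne, hQneS, -⟩ := hQ
        rcases Finset.subset_singleton_iff.mp hQsub with rfl | rfl
        · exact hQne.ne_empty rfl
        · exact hQneS rfl
      rw [hempty]
      simp [cf_one]
    · intro P hP hPne
      have h2 : 2 ≤ P.card := by
        by_contra h
        exact hPne (eq_singleton_of_card_le_one hP hS (by omega))
      rw [splits_sum hP hx0 h2]
      ring
  rw [Finset.sum_add_distrib] at hmain
  -- hA : A S = B S + X, hmain : goalsum + X = A S
  have : B S + (∑ P ∈ partitionsOf S,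
      (∑ Q ∈ P.powerset.filter (fun Q => Q.Nonempty ∧ Q ≠ P ∧ ∃ b ∈ Q, x0 ∈ b),
        cf R Q.card * cf R (P.card - Q.card)) * ∏ b ∈ P, A b)
      = (∑ P ∈ partitionsOf S, cf R P.card * ∏ b ∈ P, A b)
        + (∑ P ∈ partitionsOf S,
      (∑ Q ∈ P.powerset.filter (fun Q => Q.Nonempty ∧ Q ≠ P ∧ ∃ b ∈ Q, x0 ∈ b),
        cf R Q.card * cf R (P.card - Q.card)) * ∏ b ∈ P, A b) := by
    rw [← hA, hmain]
  exact add_right_cancel this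
end
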